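/- Quantitative Eneström–Kakeya, inner bound: Let p(X) = a_n X^n + … + a_0 with a_0 ≥ a_1 ≥ … ≥ a_n > 0, and let r = min{a_ν/a_{ν+1} : 0 ≤ ν < n}. Then for every complex z with |z| ≤ r and z ≠ r, one has (r - |z|)/|r - z| ≤ |p(z)|/a_0 ≤ (r + |z|)/|r - z|. -/

import Mathlib

/-!
Multiply `p` by `r - z`: summation by parts gives `(r - z) p(z) = r a₀ - W(z)`, where
`W(z) = ∑ (a_ν - r a_{ν+1}) z^{ν+1}` (with `a_{n+1} = 0`) has nonnegative coefficients by the
choice of `r`. Setting `z = r` shows `W(r) = r a₀`, so for `|z| ≤ r` we get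
`|W(z)| ≤ |z| W(r) / r = |z| a₀`, and the triangle inequality gives both bounds on `|r - z| |p(z)|`.
-/

open Finset

section Telescoping

variable {R : Type*} [CommRing R]

theorem sub_mul_sum_range_mul_pow (a : ℕ → R) (r z : R) (N : ℕ) :
    (r - z) * ∑ ν ∈ range N, a ν * z ^ ν =
      r * a 0 - r * a N * z ^ N - ∑ ν ∈ range N, (a ν - r * a (ν + 1)) * z ^ (ν + 1) := by
  induction N with
  | zero => simp
  | succ N ih => rw [sum_range_succ, sum_range_succ]; linear_combination ih

theorem sum_range_sub_mul_mul_pow_self (a : ℕ → R) (r : R) (N : ℕ) :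
    ∑ ν ∈ range N, (a ν - r * a (ν + 1)) * r ^ ν = a 0 - a N * r ^ N := by
  calc ∑ ν ∈ range N, (a ν - r * a (ν + 1)) * r ^ ν
      = ∑ ν ∈ range N, (a ν * r ^ ν - a (ν + 1) * r ^ (ν + 1)) :=
        sum_congr rfl fun ν _ => by ring
    _ = a 0 - a N * r ^ N := by rw [sum_range_sub', pow_zero, mul_one]

end Telescoping

theorem norm_sum_ofReal_mul_pow_succ_le {b : ℕ → ℝ} {N : ℕ} (hb : ∀ ν < N, 0 ≤ b ν)
    {r : ℝ} {z : ℂ} (hz : ‖z‖ ≤ r) :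
    ‖∑ ν ∈ range N, (b ν : ℂ) * z ^ (ν + 1)‖ ≤ ‖z‖ * ∑ ν ∈ range N, b ν * r ^ ν := by
  rw [mul_sum]
  refine (norm_sum_le _ _).trans (sum_le_sum fun ν hν => ?_)
  have hbν := hb ν (mem_range.mp hν)
  have hzν : ‖z‖ ^ ν ≤ r ^ ν := pow_le_pow_left₀ (norm_nonneg z) hz ν
  rw [norm_mul, norm_pow, Complex.norm_real, Real.norm_of_nonneg hbν, pow_succ]
  calc b ν * (‖z‖ ^ ν * ‖z‖) ≤ b ν * (r ^ ν * ‖z‖) := by gcongr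
    _ = ‖z‖ * (b ν * r ^ ν) := by ring

theorem norm_sub_mul_sum_range_sub_le {a : ℕ → ℝ} {N : ℕ} (hN : a N = 0) {r : ℝ}
    (hdec : ∀ ν < N, r * a (ν + 1) ≤ a ν) {z : ℂ} (hz : ‖z‖ ≤ r) :
    ‖(r - z) * ∑ ν ∈ range N, (a ν : ℂ) * z ^ ν - r * a 0‖ ≤ ‖z‖ * a 0 := by
  have hW := norm_sum_ofReal_mul_pow_succ_le (b := fun ν => a ν - r * a (ν + 1))
    (fun ν hν => sub_nonneg.mpr (hdec ν hν)) hz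
  rw [sum_range_sub_mul_mul_pow_self, hN, zero_mul, sub_zero] at hW
  rw [sub_mul_sum_range_mul_pow, hN]
  push_cast at hW
  simpa using hW

theorem norm_sub_mul_norm_sum_range_bounds {a : ℕ → ℝ} {N : ℕ} (hN : a N = 0) {r : ℝ}
    (ha : 0 ≤ a 0) (hdec : ∀ ν < N, r * a (ν + 1) ≤ a ν) {z : ℂ} (hz : ‖z‖ ≤ r) :
    (r - ‖z‖) * a 0 ≤ ‖(r : ℂ) - z‖ * ‖∑ ν ∈ range N, (a ν : ℂ) * z ^ ν‖ ∧
      ‖(r : ℂ) - z‖ * ‖∑ ν ∈ range N, (a ν : ℂ) * z ^ ν‖ ≤ (r + ‖z‖) * a 0 := by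
  have hW := norm_sub_mul_sum_range_sub_le hN hdec hz
  set P := (r - z) * ∑ ν ∈ range N, (a ν : ℂ) * z ^ ν
  have hra : ‖(r : ℂ) * a 0‖ = r * a 0 := by
    rw [← Complex.ofReal_mul, Complex.norm_real,
      Real.norm_of_nonneg (mul_nonneg ((norm_nonneg z).trans hz) ha)]
  rw [← norm_mul]
  constructor
  · linarith [norm_sub_norm_le ((r : ℂ) * a 0) P, norm_sub_rev ((r : ℂ) * a 0) P]
  · linarith [norm_le_insert' P ((r : ℂ) * a 0)]

theorem pos_of_le_of_antitone_succ {a : ℕ → ℝ} {n : ℕ} (hdec : ∀ ν < n, a (ν + 1) ≤ a ν)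
    (hpos : 0 < a n) {ν : ℕ} (hν : ν ≤ n) : 0 < a ν :=
  Nat.decreasingInduction (motive := fun ν _ => 0 < a ν)
    (fun k hk ih => ih.trans_le (hdec k hk)) hpos hν

theorem stmt_4 (n : ℕ) (hn : 1 ≤ n) (a : ℕ → ℝ)
    (hpos : 0 < a n) (hdec : ∀ ν < n, a (ν + 1) ≤ a ν)
    (r : ℝ)
    (hr : r = (Finset.range n).inf' (Finset.nonempty_range_iff.mpr (by omega))
      (fun ν => a ν / a (ν + 1)))
    (z : ℂ) (hzr : ‖z‖ ≤ r) (hne : z ≠ (r : ℂ)) :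
    (r - ‖z‖) / ‖(r : ℂ) - z‖ ≤
      ‖Polynomial.eval z
        (∑ ν ∈ Finset.range (n + 1), Polynomial.C ((a ν : ℂ)) * Polynomial.X ^ ν)‖ / a 0 ∧
    ‖Polynomial.eval z
        (∑ ν ∈ Finset.range (n + 1), Polynomial.C ((a ν : ℂ)) * Polynomial.X ^ ν)‖ / a 0 ≤
      (r + ‖z‖) / ‖(r : ℂ) - z‖ := by
  have ha : ∀ ν ≤ n, 0 < a ν := fun ν hν => pos_of_le_of_antitone_succ hdec hpos hν
  have hrdec : ∀ ν < n, r * a (ν + 1) ≤ a ν := fun ν hν => by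
    rw [← le_div_iff₀ (ha (ν + 1) hν), hr]
    exact inf'_le _ (mem_range.mpr hν)
  -- `a` truncated after degree `n`, so that the telescoping sums close up
  set b := Function.update a (n + 1) 0
  have hb : ∀ ν < n + 1, b ν = a ν := fun ν hν => Function.update_of_ne hν.ne _ _
  have hbn : b (n + 1) = 0 := Function.update_self _ _ _
  have hbdec : ∀ ν < n + 1, r * b (ν + 1) ≤ b ν := fun ν hν => by
    rcases Nat.lt_succ_iff_lt_or_eq.mp hν with hν | rfl
    · rw [hb ν (by omega), hb (ν + 1) (by omega)]; exact hrdec ν hν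
    · rw [hb _ hν, hbn, mul_zero]; exact hpos.le
  have heval : Polynomial.eval z
      (∑ ν ∈ range (n + 1), Polynomial.C ((a ν : ℂ)) * Polynomial.X ^ ν) =
        ∑ ν ∈ range (n + 1), (b ν : ℂ) * z ^ ν := by
    simp only [Polynomial.eval_finsetSum, Polynomial.eval_mul, Polynomial.eval_C,
      Polynomial.eval_pow, Polynomial.eval_X]
    exact sum_congr rfl fun ν hν => by rw [hb ν (mem_range.mp hν)]
  have hb0 : b 0 = a 0 := hb 0 (by omega)
  have ha0 : 0 < a 0 := ha 0 (by omega)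
  obtain ⟨hlow, hup⟩ := norm_sub_mul_norm_sum_range_bounds (a := b) (N := n + 1)
    hbn (hb0 ▸ ha0.le) hbdec hzr
  have hs : 0 < ‖(r : ℂ) - z‖ := norm_pos_iff.mpr (sub_ne_zero.mpr hne.symm)
  rw [heval, div_le_div_iff₀ hs ha0, div_le_div_iff₀ ha0 hs]
  rw [hb0] at hlow hup
  constructor <;> linarith
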